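/- Let (t_k)_{k≥1} and (r_k)_{k≥1} be sequences of positive reals with t_k < t_{k+1} < λ₁ < r_{k+1} < r_k, t_k → λ₁, r_k → λ₁, and Σ_{n≥1} Π_{k=1}^{n} (t_k/λ₁)² < ∞ and Σ_{n≥1} Π_{k=1}^{n} (λ₁/r_k)² < ∞. Define weights w_n = t_{n+1} for n ≥ 0 and w_n = r_{-n} for n ≤ −1, and let W be the bilateral weighted shift W e_n = w_n e_{n+1} on ℓ²(ℤ). Then every λ ∈ ℂ with |λ| = λ₁ is an eigenvalue of W. -/

import Mathlib

/-!
For `‖μ‖ = λ₁` the eigenvalue equation `W x = μ x` is the two-sided recurrence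
`w n * x n = μ * x (n + 1)`, whose solution with `x 0 = 1` is
`x n = ∏_{k < n} (w k / μ)` for `n ≥ 0` and `x (-(n + 1)) = ∏_{k ≤ n} (μ / w (-(k + 1)))`.
Its squared norms are exactly the products `∏ (t_k / λ₁)²` and `∏ (λ₁ / r_k)²`,
so it lies in `ℓ²(ℤ)`; expanding it in the standard basis, `W` shifts each term onto `μ` times
the next one.
-/

open Filter Finset

theorem Finset.prod_range_add_one_eq_prod_Icc {M : Type*} [CommMonoid M] (f : ℕ → M) (n : ℕ) :
    ∏ k ∈ range n, f (k + 1) = ∏ k ∈ Icc 1 n, f k := by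
  rw [range_eq_Ico, prod_Ico_add', zero_add, Ico_add_one_right_eq_Icc]

section WeightedShiftEigenseq

variable {𝕜 : Type*}

def weightedShiftEigenseq [Field 𝕜] (w : ℤ → 𝕜) (μ : 𝕜) : ℤ → 𝕜
  | (n : ℕ) => ∏ k ∈ range n, (w k / μ)
  | .negSucc n => ∏ k ∈ range (n + 1), (μ / w (-(k + 1 : ℤ)))

theorem weightedShiftEigenseq_zero [Field 𝕜] (w : ℤ → 𝕜) (μ : 𝕜) :
    weightedShiftEigenseq w μ 0 = 1 :=
  prod_range_zero _

theorem mul_weightedShiftEigenseq [Field 𝕜] {w : ℤ → 𝕜} {μ : 𝕜} (hμ : μ ≠ 0)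
    (hw : ∀ n, w n ≠ 0) (n : ℤ) :
    w n * weightedShiftEigenseq w μ n = μ * weightedShiftEigenseq w μ (n + 1) := by
  rcases n with (m | _ | m)
  · change w m * ∏ k ∈ range m, (w k / μ) = μ * ∏ k ∈ range (m + 1), (w k / μ)
    rw [prod_range_succ]
    field_simp
  · change w (-1) * ∏ k ∈ range 1, (μ / w (-(k + 1 : ℤ))) = μ * 1
    simp only [prod_range_one, Nat.cast_zero, zero_add, mul_one]
    exact mul_div_cancel₀ μ (hw (-1))
  · change w (-((m + 1 : ℕ) + 1 : ℤ)) * ∏ k ∈ range (m + 1 + 1), (μ / w (-(k + 1 : ℤ))) =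
      μ * ∏ k ∈ range (m + 1), (μ / w (-(k + 1 : ℤ)))
    rw [prod_range_succ]
    field_simp [hw]

theorem norm_weightedShiftEigenseq_natCast [NormedField 𝕜] (w : ℤ → 𝕜) (μ : 𝕜) (n : ℕ) :
    ‖weightedShiftEigenseq w μ n‖ = ∏ k ∈ range n, (‖w k‖ / ‖μ‖) := by
  simp [weightedShiftEigenseq, norm_prod]

theorem norm_weightedShiftEigenseq_neg_add_one [NormedField 𝕜] (w : ℤ → 𝕜) (μ : 𝕜) (n : ℕ) :
    ‖weightedShiftEigenseq w μ (-(n + 1))‖ = ∏ k ∈ range (n + 1), (‖μ‖ / ‖w (-(k + 1))‖) := by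
  simp only [← Int.negSucc_eq, weightedShiftEigenseq, norm_prod, norm_div]

end WeightedShiftEigenseq

theorem weightedShift_apply_eq_smul {𝕜 : Type*} [NormedField 𝕜] {p : ENNReal} [Fact (1 ≤ p)]
    (hp : p ≠ ⊤) {w : ℤ → 𝕜} {W : lp (fun _ : ℤ => 𝕜) p →L[𝕜] lp (fun _ : ℤ => 𝕜) p}
    (hW : ∀ n : ℤ, W (lp.single p n 1) = w n • lp.single p (n + 1) 1) {μ : 𝕜}
    {x : lp (fun _ : ℤ => 𝕜) p} (hx : ∀ n, w n * x n = μ * x (n + 1)) :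
    W x = μ • x := by
  have hx_sum : HasSum (fun n => lp.single p n (x n)) x := lp.hasSum_single hp x
  have hsingle (n : ℤ) : lp.single p n (x n) = x n • lp.single (E := fun _ : ℤ => 𝕜) p n 1 := by
    rw [← lp.single_smul, smul_eq_mul, mul_one]
  have hterm (n : ℤ) : W (lp.single p n (x n)) = μ • lp.single p (n + 1) (x (n + 1)) := by
    rw [hsingle, hsingle, map_smul, hW, smul_smul, smul_smul, mul_comm, hx]
  have hWx : HasSum (fun n => μ • lp.single p (n + 1) (x (n + 1))) (W x) := by
    simpa only [hterm] using hx_sum.mapL W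
  have hμx : HasSum (fun n => μ • lp.single p (n + 1) (x (n + 1))) (μ • x) :=
    ((Equiv.addRight 1).hasSum_iff.mpr hx_sum).const_smul μ
  exact hWx.unique hμx

theorem stmt12_general (l1 : ℝ) (hl1 : 0 < l1) (t r : ℕ → ℝ)
    (htpos : ∀ k, 1 ≤ k → 0 < t k)
    (hrgt : ∀ k, 1 ≤ k → l1 < r k)
    (htsum : Summable (fun n : ℕ => ∏ k ∈ Finset.Icc 1 n, (t k / l1) ^ 2))
    (hrsum : Summable (fun n : ℕ => ∏ k ∈ Finset.Icc 1 n, (l1 / r k) ^ 2))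
    (w : ℤ → ℝ)
    (hw1 : ∀ n : ℤ, 0 ≤ n → w n = t (n.toNat + 1))
    (hw2 : ∀ n : ℤ, n < 0 → w n = r (-n).toNat)
    (W : lp (fun _ : ℤ => ℂ) 2 →L[ℂ] lp (fun _ : ℤ => ℂ) 2)
    (hW : ∀ n : ℤ, W (lp.single 2 n (1 : ℂ)) = (w n : ℂ) • lp.single 2 (n + 1) (1 : ℂ)) :
    ∀ μ : ℂ, ‖μ‖ = l1 → ∃ x, x ≠ 0 ∧ W x = μ • x := by
  intro μ hμ
  have hμ0 : μ ≠ 0 := by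
    rintro rfl
    exact hl1.ne (norm_zero.symm.trans hμ)
  have hw_pos (n : ℤ) : 0 < w n := by
    rcases le_or_gt 0 n with hn | hn
    · exact hw1 n hn ▸ htpos _ le_add_self
    · exact hw2 n hn ▸ hl1.trans (hrgt _ (by omega))
  have hw_norm (n : ℤ) : ‖(w n : ℂ)‖ = w n := by
    rw [Complex.norm_real, Real.norm_of_nonneg (hw_pos n).le]
  set x := weightedShiftEigenseq (fun n => (w n : ℂ)) μ
  have hx_nat (n : ℕ) : ‖x n‖ ^ (2 : ℝ) = ∏ k ∈ Icc 1 n, (t k / l1) ^ 2 := by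
    rw [Real.rpow_two, norm_weightedShiftEigenseq_natCast, ← prod_pow,
      ← prod_range_add_one_eq_prod_Icc]
    refine prod_congr rfl fun k _ => ?_
    rw [hw_norm, hμ, hw1 k (by positivity), Int.toNat_natCast]
  have hx_neg (n : ℕ) : ‖x (-(n + 1))‖ ^ (2 : ℝ) = ∏ k ∈ Icc 1 (n + 1), (l1 / r k) ^ 2 := by
    rw [Real.rpow_two, norm_weightedShiftEigenseq_neg_add_one, ← prod_pow,
      ← prod_range_add_one_eq_prod_Icc]
    refine prod_congr rfl fun k _ => ?_
    rw [hw_norm, hμ, hw2 _ (by omega), neg_neg, ← Nat.cast_succ, Int.toNat_natCast]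
  have hx_mem : Memℓp x 2 := memℓp_gen <| by
    refine .of_nat_of_neg_add_one ?_ ?_
    · simpa only [ENNReal.toReal_ofNat, hx_nat] using htsum
    · simpa only [ENNReal.toReal_ofNat, hx_neg] using (summable_nat_add_iff 1).mpr hrsum
  refine ⟨⟨x, hx_mem⟩, fun h => ?_, weightedShift_apply_eq_smul ENNReal.ofNat_ne_top hW
    (mul_weightedShiftEigenseq hμ0 fun n => by exact_mod_cast (hw_pos n).ne')⟩
  have hx0 : x 0 = 0 := congrArg (fun y : lp (fun _ : ℤ => ℂ) 2 => y 0) h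
  exact one_ne_zero ((weightedShiftEigenseq_zero _ μ).symm.trans hx0)

/-- Scalar model of Corollary 4.4: with `t_k ↑ λ₁`, `r_k ↓ λ₁`, and the products
`Π(t_k/λ₁)²`, `Π(λ₁/r_k)²` summable, the bilateral weighted shift with weights
`w_n = t_{n+1}` for `n ≥ 0` and `w_n = r_{−n}` for `n ≤ −1` has every `λ` with
`|λ| = λ₁` as an eigenvalue. -/
theorem stmt12 (l1 : ℝ) (hl1 : 0 < l1) (t r : ℕ → ℝ)
    (htpos : ∀ k, 1 ≤ k → 0 < t k)
    (htmono : ∀ k, 1 ≤ k → t k < t (k + 1)) (htlt : ∀ k, 1 ≤ k → t k < l1)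
    (hrmono : ∀ k, 1 ≤ k → r (k + 1) < r k) (hrgt : ∀ k, 1 ≤ k → l1 < r k)
    (htlim : Tendsto t atTop (nhds l1)) (hrlim : Tendsto r atTop (nhds l1))
    (htsum : Summable (fun n : ℕ => ∏ k ∈ Finset.Icc 1 n, (t k / l1) ^ 2))
    (hrsum : Summable (fun n : ℕ => ∏ k ∈ Finset.Icc 1 n, (l1 / r k) ^ 2))
    (w : ℤ → ℝ)
    (hw1 : ∀ n : ℤ, 0 ≤ n → w n = t (n.toNat + 1))
    (hw2 : ∀ n : ℤ, n < 0 → w n = r (-n).toNat)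
    (W : lp (fun _ : ℤ => ℂ) 2 →L[ℂ] lp (fun _ : ℤ => ℂ) 2)
    (hW : ∀ n : ℤ, W (lp.single 2 n (1 : ℂ)) = (w n : ℂ) • lp.single 2 (n + 1) (1 : ℂ)) :
    ∀ μ : ℂ, ‖μ‖ = l1 → ∃ x, x ≠ 0 ∧ W x = μ • x :=
  stmt12_general l1 hl1 t r htpos hrgt htsum hrsum w hw1 hw2 W hW
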